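/- Let k be a field. The k-algebra homomorphism ψ : k[x,y] → k[t] × k[t] determined by ψ(x) = (0, t²) and ψ(y) = (t, t) has kernel exactly the principal ideal generated by x(x−y²). Consequently the subalgebra of k[t] × k[t] generated by (t,t) and (0,t²) is isomorphic to k[x,y]/(x(x−y²)) (the coordinate ring of the plane curve singularity of type A₂). -/

import Mathlib

/-! Identifying `k[x,y]` with `(k[t])[x]` via `y ↦ t`, `ψ` becomes `p ↦ (p(0), p(t²))`. Over the
domain `k[t]` a polynomial vanishing at the two distinct points `0` and `t²` is divisible by
`x (x - t²)`, which corresponds to `x (x - y²)`. The second part is the first isomorphism theorem,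
the range of `ψ` being generated by the images of `x` and `y`. -/

open MvPolynomial

noncomputable section

/-- The `k`-algebra homomorphism `k[x,y] → k[t] × k[t]` with
`x ↦ (0, t²)` and `y ↦ (t, t)` (here `x = X 0`, `y = X 1`). -/
def A2.psi (k : Type) [Field k] :
    MvPolynomial (Fin 2) k →ₐ[k] Polynomial k × Polynomial k :=
  aeval (fun i : Fin 2 =>
    if i = 0 then ((0, Polynomial.X ^ 2) : Polynomial k × Polynomial k)
    else ((Polynomial.X, Polynomial.X) : Polynomial k × Polynomial k))

namespace Polynomial

variable {R : Type*} [CommRing R] [IsDomain R]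

theorem mem_span_mul_X_sub_C_iff {a b : R} (hab : a ≠ b) {p : R[X]} :
    p ∈ Ideal.span {(X - C a) * (X - C b)} ↔ p.IsRoot a ∧ p.IsRoot b := by
  rw [Ideal.mem_span_singleton]
  constructor
  · rintro ⟨q, rfl⟩
    simp [IsRoot]
  · rintro ⟨ha, hb⟩
    obtain ⟨q, rfl⟩ := dvd_iff_isRoot.2 ha
    have hq : q.IsRoot b := by
      simpa [IsRoot, sub_ne_zero.2 hab.symm] using hb
    obtain ⟨r, rfl⟩ := dvd_iff_isRoot.2 hq
    exact ⟨r, (mul_assoc _ _ _).symm⟩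

theorem ker_evalRingHom_prod {a b : R} (hab : a ≠ b) :
    RingHom.ker ((evalRingHom a).prod (evalRingHom b)) = Ideal.span {(X - C a) * (X - C b)} := by
  ext p
  simp [mem_span_mul_X_sub_C_iff hab, RingHom.mem_ker, Prod.ext_iff, IsRoot]

end Polynomial

theorem Ideal.comap_span_singleton_ringEquiv {R S : Type*} [CommRing R] [CommRing S]
    (e : R ≃+* S) (z : R) : (Ideal.span {e z}).comap e = Ideal.span {z} := by
  rw [← Set.image_singleton, ← Ideal.map_span]
  exact Ideal.comap_map_of_bijective _ e.bijective

namespace A2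

variable (k : Type) [Field k]

def xOuterEquiv : MvPolynomial (Fin 2) k ≃ₐ[k] Polynomial (Polynomial k) :=
  (finSuccEquiv k 1).trans (Polynomial.mapAlgEquiv (uniqueAlgEquiv k (Fin 1)))

lemma xOuterEquiv_X_zero : xOuterEquiv k (X 0) = Polynomial.X := by
  simp [xOuterEquiv, finSuccEquiv_X_zero]

lemma xOuterEquiv_X_one : xOuterEquiv k (X 1) = Polynomial.C Polynomial.X := by
  simpa [xOuterEquiv] using congrArg (Polynomial.mapAlgEquiv (uniqueAlgEquiv k (Fin 1)))
    (finSuccEquiv_X_succ (R := k) (j := (0 : Fin 1)))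

lemma psi_eq_comp : (psi k).toRingHom =
    ((Polynomial.evalRingHom 0).prod (Polynomial.evalRingHom (Polynomial.X ^ 2))).comp
      (xOuterEquiv k : MvPolynomial (Fin 2) k →+* Polynomial (Polynomial k)) := by
  apply MvPolynomial.ringHom_ext
  · intro r
    have hC : xOuterEquiv k (C r) = Polynomial.C (Polynomial.C r) := (xOuterEquiv k).commutes r
    simp [psi, hC]
  · intro i
    fin_cases i <;> simp [psi, xOuterEquiv_X_zero, xOuterEquiv_X_one]

lemma ker_psi : RingHom.ker (psi k) = Ideal.span {X 0 * (X 0 - X 1 ^ 2)} := by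
  have hgen : xOuterEquiv k (X 0 * (X 0 - X 1 ^ 2)) =
      (Polynomial.X - Polynomial.C 0) * (Polynomial.X - Polynomial.C (Polynomial.X ^ 2)) := by
    simp [xOuterEquiv_X_zero, xOuterEquiv_X_one]
  have hne : (0 : Polynomial k) ≠ Polynomial.X ^ 2 := (pow_ne_zero 2 Polynomial.X_ne_zero).symm
  rw [← RingHom.ker_coe_toRingHom, ← AlgHom.toRingHom_eq_coe, psi_eq_comp, ← RingHom.comap_ker,
    Polynomial.ker_evalRingHom_prod hne, ← hgen]
  exact Ideal.comap_span_singleton_ringEquiv (xOuterEquiv k).toRingEquiv _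

lemma range_psi : (psi k).range = Algebra.adjoin k
    {((Polynomial.X, Polynomial.X) : Polynomial k × Polynomial k), (0, Polynomial.X ^ 2)} := by
  rw [psi, ← Algebra.adjoin_range_eq_range_aeval]
  congr 1
  ext z
  constructor
  · rintro ⟨i, rfl⟩
    fin_cases i <;> simp
  · rintro (rfl | rfl)
    · exact ⟨1, by simp⟩
    · exact ⟨0, by simp⟩

end A2

theorem A2_kernel_of_normalization (k : Type) [Field k] :
    RingHom.ker (A2.psi k) = Ideal.span {X 0 * (X 0 - X 1 ^ 2)} ∧
    Nonempty ((MvPolynomial (Fin 2) k ⧸ (Ideal.span {X 0 * (X 0 - X 1 ^ 2)} : Ideal (MvPolynomial (Fin 2) k))) ≃ₐ[k]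
      (Algebra.adjoin k {((Polynomial.X, Polynomial.X) : Polynomial k × Polynomial k),
        ((0, Polynomial.X ^ 2) : Polynomial k × Polynomial k)})) :=
  ⟨A2.ker_psi k, ⟨(Ideal.quotientEquivAlgOfEq k (A2.ker_psi k)).symm.trans <|
    (Ideal.quotientKerEquivRange (A2.psi k)).trans (Subalgebra.equivOfEq _ _ (A2.range_psi k))⟩⟩
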